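/- arXiv:1008.1347 — 6 statements merged into one kernel-verified Lean document; each statement's English description precedes it below -/
import Mathlib

section
/- Let A be an n×n real symmetric positive semi-definite matrix of rank r such that every diagonal entry of A is nonzero. Then there exists a vector x = (x_1, …, x_n) ∈ ℝ^n with x_i ≠ 0 for all i = 1, …, n, and a positive semi-definite real symmetric matrix B of rank r − 1, such that A = x xᵗ + B. -/
/-!
Write `A = Cᵀ C`. The columns `cᵢ` of `C` are nonzero since `‖cᵢ‖² = Aᵢᵢ`, so the hyperplanes
`cᵢ^⊥` do not cover the column space of `C` (the field is infinite), and we may pick a unit vector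
`u` in that space off all of them; then `x = Cᵀ u` has entries `xᵢ = ⟨cᵢ, u⟩ ≠ 0`. With the
orthogonal projection `P = 1 - u uᵀ` we get `A - x xᵀ = (P C)ᵀ (P C)`, which is positive
semidefinite of the rank of `P C`; that rank is `rank C - 1`, because the kernel of `P` is the line
through `u ∈ range C`.
-/

open Matrix

theorem Module.Dual.exists_forall_apply_ne_zero {K V ι : Type*} [DivisionRing K] [Infinite K]
    [AddCommGroup V] [Module K V] [Finite ι] {f : ι → Module.Dual K V} (hf : ∀ i, f i ≠ 0) :
    ∃ v, ∀ i, f i v ≠ 0 := by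
  by_contra! h
  obtain ⟨i, hi⟩ := Subspace.exists_eq_top_of_iUnion_eq_univ (p := fun i => LinearMap.ker (f i))
    (Set.eq_univ_of_forall fun v => Set.mem_iUnion.2 (h v))
  exact hf i (LinearMap.ker_eq_top.1 hi)

theorem LinearMap.finrank_range_comp_add_finrank_ker {K V W X : Type*} [DivisionRing K]
    [AddCommGroup V] [Module K V] [AddCommGroup W] [Module K W] [AddCommGroup X] [Module K X]
    [FiniteDimensional K V] (g : V →ₗ[K] W) (f : W →ₗ[K] X) (h : ker f ≤ range g) :
    Module.finrank K (range (f ∘ₗ g)) + Module.finrank K (ker f) = Module.finrank K (range g) := by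
  have := (f.domRestrict (range g)).finrank_range_add_finrank_ker
  rwa [range_domRestrict, ← range_comp, ker_domRestrict,
    (Submodule.comapSubtypeEquivOfLe h).finrank_eq] at this

namespace Matrix

section CommRing

variable {m n R : Type*} [DecidableEq m] [CommRing R] {u : m → R}

theorem transpose_one_sub_vecMulVec_self (u : m → R) :
    (1 - vecMulVec u u)ᵀ = 1 - vecMulVec u u := by
  rw [transpose_sub, transpose_one, transpose_vecMulVec]

theorem one_sub_vecMulVec_self_mulVec [Fintype m] (u v : m → R) :
    (1 - vecMulVec u u) *ᵥ v = v - (u ⬝ᵥ v) • u := by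
  rw [sub_mulVec, one_mulVec, vecMulVec_mulVec, op_smul_eq_smul]

theorem one_sub_vecMulVec_self_mul_self [Fintype m] (hu : u ⬝ᵥ u = 1) :
    (1 - vecMulVec u u) * (1 - vecMulVec u u) = 1 - vecMulVec u u := by
  rw [sub_mul, mul_sub, mul_sub, vecMulVec_mul_vecMulVec, hu, one_smul]
  simp

theorem transpose_mul_self_sub_vecMulVec [Fintype m] (C : Matrix m n R) (hu : u ⬝ᵥ u = 1) :
    Cᵀ * C - vecMulVec (Cᵀ *ᵥ u) (Cᵀ *ᵥ u) =
      ((1 - vecMulVec u u) * C)ᵀ * ((1 - vecMulVec u u) * C) := by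
  rw [transpose_mul, transpose_one_sub_vecMulVec_self, Matrix.mul_assoc, ← Matrix.mul_assoc _ _ C,
    one_sub_vecMulVec_self_mul_self hu, Matrix.sub_mul, Matrix.one_mul, Matrix.mul_sub,
    vecMulVec_mul, mul_vecMulVec, mulVec_transpose]

theorem ker_mulVecLin_one_sub_vecMulVec_self [Fintype m] (hu : u ⬝ᵥ u = 1) :
    LinearMap.ker (1 - vecMulVec u u).mulVecLin = Submodule.span R {u} := by
  ext v
  simp only [LinearMap.mem_ker, mulVecLin_apply, one_sub_vecMulVec_self_mulVec,
    Submodule.mem_span_singleton, sub_eq_zero]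
  constructor
  · exact fun h => ⟨_, h.symm⟩
  · rintro ⟨a, rfl⟩
    rw [dotProduct_smul, hu, smul_eq_mul, mul_one]

end CommRing

theorem rank_one_sub_vecMulVec_self_mul_add_one {m n K : Type*} [Fintype m] [DecidableEq m]
    [Fintype n] [Field K] {u : m → K} (C : Matrix m n K) (hu : u ⬝ᵥ u = 1)
    (huC : u ∈ LinearMap.range C.mulVecLin) :
    ((1 - vecMulVec u u) * C).rank + 1 = C.rank := by
  have hu0 : u ≠ 0 := by rintro rfl; simp at hu
  have hker : LinearMap.ker (1 - vecMulVec u u).mulVecLin ≤ LinearMap.range C.mulVecLin := by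
    rwa [ker_mulVecLin_one_sub_vecMulVec_self hu, Submodule.span_singleton_le_iff_mem]
  have := LinearMap.finrank_range_comp_add_finrank_ker _ _ hker
  rwa [ker_mulVecLin_one_sub_vecMulVec_self hu, finrank_span_singleton hu0,
    ← mulVecLin_mul] at this

theorem exists_mem_range_forall_transpose_mulVec_ne_zero {m n K : Type*} [Fintype m] [Fintype n]
    [DecidableEq n] [Field K] [Infinite K] (C : Matrix m n K) (hC : ∀ i, (Cᵀ * C) i i ≠ 0) :
    ∃ w ∈ LinearMap.range C.mulVecLin, ∀ i, (Cᵀ *ᵥ w) i ≠ 0 := by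
  let V := LinearMap.range C.mulVecLin
  let f : n → Module.Dual K V := fun i => LinearMap.proj i ∘ₗ Cᵀ.mulVecLin ∘ₗ V.subtype
  have hf : ∀ i, f i ≠ 0 := fun i hi => hC i <| by
    have : (Cᵀ *ᵥ (C *ᵥ Pi.single i 1)) i = 0 :=
      LinearMap.congr_fun hi ⟨_, LinearMap.mem_range_self C.mulVecLin (Pi.single i 1)⟩
    rwa [mulVec_mulVec, mulVec_single_one] at this
  obtain ⟨⟨w, hw⟩, hfw⟩ := Module.Dual.exists_forall_apply_ne_zero hf
  exact ⟨w, hw, hfw⟩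

open scoped ComplexOrder in
theorem PosSemidef.exists_eq_conjTranspose_mul_self {n 𝕜 : Type*} [Fintype n] [DecidableEq n]
    [RCLike 𝕜] {A : Matrix n n 𝕜} (hA : A.PosSemidef) : ∃ C : Matrix n n 𝕜, A = Cᴴ * C := by
  open scoped MatrixOrder in
  refine ⟨CFC.sqrt A, ?_⟩
  rw [(CFC.sqrt_nonneg A).posSemidef.isHermitian.eq, CFC.sqrt_mul_sqrt_self A hA.nonneg]

theorem PosSemidef.exists_eq_vecMulVec_add {n : Type*} [Fintype n] [DecidableEq n] [Nonempty n]
    {A : Matrix n n ℝ} (hA : A.PosSemidef) (hdiag : ∀ i, A i i ≠ 0) :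
    ∃ (x : n → ℝ) (B : Matrix n n ℝ), (∀ i, x i ≠ 0) ∧ B.PosSemidef ∧ B.rank + 1 = A.rank ∧
      A = vecMulVec x x + B := by
  obtain ⟨C, rfl⟩ := hA.exists_eq_conjTranspose_mul_self
  rw [conjTranspose_eq_transpose_of_trivial] at hdiag ⊢
  obtain ⟨w, hwC, hw⟩ := exists_mem_range_forall_transpose_mulVec_ne_zero C hdiag
  obtain ⟨u, huC, hu, hx⟩ :
      ∃ u ∈ LinearMap.range C.mulVecLin, u ⬝ᵥ u = 1 ∧ ∀ i, (Cᵀ *ᵥ u) i ≠ 0 := by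
    have hww : w ⬝ᵥ w ≠ 0 := by
      rw [Ne, dotProduct_self_eq_zero]
      rintro rfl
      exact hw (Classical.arbitrary n) (by simp)
    have hc : √(w ⬝ᵥ w) * √(w ⬝ᵥ w) = w ⬝ᵥ w :=
      Real.mul_self_sqrt (Finset.sum_nonneg fun i _ => mul_self_nonneg (w i))
    have hc0 : √(w ⬝ᵥ w) ≠ 0 := fun h => hww (by rw [← hc, h, zero_mul])
    refine ⟨(√(w ⬝ᵥ w))⁻¹ • w, Submodule.smul_mem _ _ hwC, ?_, fun i => ?_⟩
    · rw [smul_dotProduct, dotProduct_smul, smul_smul, smul_eq_mul, ← mul_inv, hc,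
        inv_mul_cancel₀ hww]
    · rw [mulVec_smul, Pi.smul_apply, smul_eq_mul]
      exact mul_ne_zero (inv_ne_zero hc0) (hw i)
  refine ⟨Cᵀ *ᵥ u, ((1 - vecMulVec u u) * C)ᵀ * ((1 - vecMulVec u u) * C), hx, ?_, ?_, ?_⟩
  · exact conjTranspose_eq_transpose_of_trivial ((1 - vecMulVec u u) * C) ▸
      posSemidef_conjTranspose_mul_self _
  · rw [rank_transpose_mul_self, rank_transpose_mul_self]
    exact rank_one_sub_vecMulVec_self_mul_add_one C hu huC
  · rw [← transpose_mul_self_sub_vecMulVec C hu, add_sub_cancel]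

end Matrix

/-- Let `A` be an `n × n` real symmetric positive semi-definite matrix of
rank `r` such that every diagonal entry of `A` is nonzero.  Then there is a vector
`x ∈ ℝⁿ` with all entries nonzero and a positive semi-definite real symmetric matrix `B`
of rank `r - 1` such that `A = x xᵗ + B`. -/
theorem stmt0 (n r : ℕ) (A : Matrix (Fin n) (Fin n) ℝ)
    (hA : A.PosSemidef) (hrank : A.rank = r) (hdiag : ∀ i, A i i ≠ 0) :
    ∃ (x : Fin n → ℝ) (B : Matrix (Fin n) (Fin n) ℝ),
      (∀ i, x i ≠ 0) ∧ B.PosSemidef ∧ B.rank = r - 1 ∧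
      A = vecMulVec x x + B := by
  subst hrank
  rcases isEmpty_or_nonempty (Fin n) with _ | _
  · refine ⟨0, A, isEmptyElim, hA, ?_, Subsingleton.elim _ _⟩
    have := A.rank_le_card_width
    rw [Fintype.card_eq_zero] at this
    omega
  · obtain ⟨x, B, hx, hB, hBrank, rfl⟩ := hA.exists_eq_vecMulVec_add hdiag
    exact ⟨x, B, hx, hB, by omega, rfl⟩
end

section
/- Let x = (x_1, …, x_n), y = (y_1, …, y_n) ∈ ℝ^n with x_i ≠ 0 for all i = 1, …, n. If x and y are linearly independent, then there exists a singular positive semi-definite real symmetric matrix A of rank n − 1 such that the Hadamard product A ∘ (x xᵗ + y yᵗ) is positive definite. -/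
/-!
Take `A = D E D` with `D = diag(x⁻¹)` and `E = I - J / n` the centering matrix, which is
positive semidefinite with kernel spanned by the all-ones vector; so `A` is singular of rank
`n - 1`.
Since `M ∘ (v vᵗ) = diag(v) M diag(v)`, the Hadamard product is `E + diag(w) E diag(w)` with
`w = y / x`. A sum of two positive semidefinite matrices is definite once their kernels meet
trivially, and a common kernel vector `u ≠ 0` would make both `u` and `w ∘ u` constant, hence
`w` constant, i.e. `y` a multiple of `x`.
-/

open Matrix

namespace Matrix

variable {ι 𝕜 : Type*} [Fintype ι]

lemma diagonal_mul_mul_diagonal_hadamard_vecMulVec {R : Type*} [CommSemiring R] [DecidableEq ι]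
    (M : Matrix ι ι R) (d v : ι → R) :
    (diagonal d * M * diagonal d) ⊙ vecMulVec v v = diagonal (v * d) * M * diagonal (v * d) := by
  ext i j
  simp only [hadamard_apply, vecMulVec_apply, mul_diagonal, diagonal_mul, Pi.mul_apply]
  ring

open scoped ComplexOrder

variable [RCLike 𝕜]

lemma PosSemidef.mulVec_eq_zero_of_conjTranspose_mul_mul {A : Matrix ι ι 𝕜}
    (hA : A.PosSemidef) (B : Matrix ι ι 𝕜) {u : ι → 𝕜} (h : (Bᴴ * A * B) *ᵥ u = 0) :
    A *ᵥ (B *ᵥ u) = 0 := by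
  rw [← (hA.conjTranspose_mul_mul_same B).dotProduct_mulVec_zero_iff] at h
  rw [← hA.dotProduct_mulVec_zero_iff, ← h, star_mulVec, dotProduct_mulVec, vecMul_vecMul,
    ← dotProduct_mulVec, mulVec_mulVec]

lemma PosSemidef.posDef_add {A B : Matrix ι ι 𝕜} (hA : A.PosSemidef) (hB : B.PosSemidef)
    (h : ∀ u, A *ᵥ u = 0 → B *ᵥ u = 0 → u = 0) : (A + B).PosDef := by
  refine .of_dotProduct_mulVec_pos (hA.isHermitian.add hB.isHermitian) fun u hu => ?_
  have hAu := hA.dotProduct_mulVec_nonneg u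
  have hBu := hB.dotProduct_mulVec_nonneg u
  rw [add_mulVec, dotProduct_add]
  refine lt_of_le_of_ne (add_nonneg hAu hBu) fun h0 => hu ?_
  obtain ⟨hA0, hB0⟩ := (add_eq_zero_iff_of_nonneg hAu hBu).mp h0.symm
  exact h u ((hA.dotProduct_mulVec_zero_iff u).mp hA0) ((hB.dotProduct_mulVec_zero_iff u).mp hB0)

end Matrix

lemma Finset.sum_sub_sum_div_card {ι : Type*} [Fintype ι] (u : ι → ℝ) :
    ∑ i, (u i - (∑ j, u j) / Fintype.card ι) = 0 := by
  rcases isEmpty_or_nonempty ι with _ | _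
  · simp
  · rw [Finset.sum_sub_distrib, Finset.sum_const, Finset.card_univ, nsmul_eq_mul,
      mul_div_cancel₀ _ (by positivity), sub_self]

section Centering

variable (ι : Type*) [Fintype ι] [DecidableEq ι]

noncomputable def centeringMatrix : Matrix ι ι ℝ :=
  1 - (Fintype.card ι : ℝ)⁻¹ • of fun _ _ => 1

variable {ι}

lemma centeringMatrix_mulVec (u : ι → ℝ) :
    centeringMatrix ι *ᵥ u = fun i => u i - (∑ j, u j) / Fintype.card ι := by
  rw [centeringMatrix, sub_mulVec, one_mulVec, smul_mulVec]
  ext i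
  simp [mulVec, dotProduct, div_eq_inv_mul]

lemma dotProduct_centeringMatrix_mulVec (u : ι → ℝ) :
    u ⬝ᵥ centeringMatrix ι *ᵥ u = ∑ i, (u i - (∑ j, u j) / Fintype.card ι) ^ 2 := by
  have h := Finset.sum_sub_sum_div_card u
  rw [centeringMatrix_mulVec, dotProduct]
  calc ∑ i, u i * (u i - (∑ j, u j) / Fintype.card ι)
      = ∑ i, (u i - (∑ j, u j) / Fintype.card ι) ^ 2
        + (∑ j, u j) / Fintype.card ι * ∑ i, (u i - (∑ j, u j) / Fintype.card ι) := by
        rw [Finset.mul_sum, ← Finset.sum_add_distrib]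
        exact Finset.sum_congr rfl fun i _ => by ring
    _ = _ := by rw [h, mul_zero, add_zero]

lemma isHermitian_centeringMatrix : (centeringMatrix ι).IsHermitian :=
  .ext fun i j => by simp [centeringMatrix, one_apply, eq_comm]

lemma posSemidef_centeringMatrix : (centeringMatrix ι).PosSemidef :=
  .of_dotProduct_mulVec_nonneg isHermitian_centeringMatrix fun u => by
    rw [star_trivial, dotProduct_centeringMatrix_mulVec]
    positivity

lemma ker_mulVecLin_centeringMatrix :
    LinearMap.ker (centeringMatrix ι).mulVecLin = Submodule.span ℝ {1} := by
  ext u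
  simp only [LinearMap.mem_ker, mulVecLin_apply, centeringMatrix_mulVec,
    Submodule.mem_span_singleton, funext_iff, Pi.zero_apply, sub_eq_zero, Pi.smul_apply,
    Pi.one_apply, smul_eq_mul, mul_one]
  refine ⟨fun h => ⟨_, fun i => (h i).symm⟩, fun ⟨a, ha⟩ i => ?_⟩
  have : Nonempty ι := ⟨i⟩
  simp only [← ha, Finset.sum_const, Finset.card_univ, nsmul_eq_mul]
  field_simp

lemma centeringMatrix_mulVec_eq_zero_iff {u : ι → ℝ} :
    centeringMatrix ι *ᵥ u = 0 ↔ ∃ a : ℝ, a • 1 = u := by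
  rw [← mulVecLin_apply, ← LinearMap.mem_ker, ker_mulVecLin_centeringMatrix,
    Submodule.mem_span_singleton]

lemma rank_centeringMatrix [Nonempty ι] : (centeringMatrix ι).rank = Fintype.card ι - 1 := by
  have h := LinearMap.finrank_range_add_finrank_ker (centeringMatrix ι).mulVecLin
  rw [ker_mulVecLin_centeringMatrix, finrank_span_singleton one_ne_zero,
    Module.finrank_fintype_fun_eq_card] at h
  rw [rank]
  omega

lemma det_centeringMatrix [Nonempty ι] : (centeringMatrix ι).det = 0 :=
  exists_mulVec_eq_zero_iff.mp
    ⟨1, one_ne_zero, by simpa using centeringMatrix_mulVec_eq_zero_iff.mpr ⟨1, rfl⟩⟩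

lemma posDef_centeringMatrix_add_diagonal_mul_mul_diagonal {w : ι → ℝ}
    (hw : ∀ c : ℝ, w ≠ c • 1) :
    (centeringMatrix ι + diagonal w * centeringMatrix ι * diagonal w).PosDef := by
  have hE := posSemidef_centeringMatrix (ι := ι)
  have hwE : (diagonal w * centeringMatrix ι * diagonal w).PosSemidef := by
    simpa using hE.conjTranspose_mul_mul_same (diagonal w)
  refine hE.posDef_add hwE fun u hu hwu => ?_
  have hwu' := hE.mulVec_eq_zero_of_conjTranspose_mul_mul (diagonal w) (by simpa using hwu)
  obtain ⟨a, rfl⟩ := centeringMatrix_mulVec_eq_zero_iff.mp hu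
  obtain ⟨b, hb⟩ := centeringMatrix_mulVec_eq_zero_iff.mp hwu'
  by_contra hu0
  have ha : a ≠ 0 := by rintro rfl; simp at hu0
  refine hw (b / a) (funext fun i => ?_)
  have := congrFun hb i
  simp only [Pi.smul_apply, Pi.one_apply, smul_eq_mul, mul_one, mulVec_diagonal] at this
  simp [this, ha]

end Centering

/-- Let `x, y ∈ ℝⁿ` with all entries of `x` nonzero.  If `x` and `y` are
linearly independent, then there is a singular positive semi-definite real symmetric matrix
`A` of rank `n - 1` such that the Hadamard product `A ∘ (x xᵗ + y yᵗ)` is positive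
definite. -/
theorem stmt5 (n : ℕ) (x y : Fin n → ℝ) (hx : ∀ i, x i ≠ 0)
    (hli : LinearIndependent ℝ ![x, y]) :
    ∃ A : Matrix (Fin n) (Fin n) ℝ,
      A.PosSemidef ∧ A.det = 0 ∧ A.rank = n - 1 ∧
      (A.hadamard (vecMulVec x x + vecMulVec y y)).PosDef := by
  have hx0 : x ≠ 0 := hli.ne_zero 0
  have : Nonempty (Fin n) := by
    by_contra h
    exact hx0 (funext fun i => (h ⟨i⟩).elim)
  have hD : IsUnit (diagonal x⁻¹).det := by
    simpa [det_diagonal, Finset.prod_ne_zero_iff] using hx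
  have hxx : x * x⁻¹ = 1 := funext fun i => mul_inv_cancel₀ (hx i)
  have hyx : ∀ c : ℝ, y * x⁻¹ ≠ c • 1 := by
    intro c h
    refine (LinearIndependent.pair_iff' hx0).mp hli c (funext fun i => ?_)
    have := congrFun h i
    simp only [Pi.mul_apply, Pi.inv_apply, Pi.smul_apply, Pi.one_apply, smul_eq_mul,
      mul_one] at this
    simp [← this, hx i]
  refine ⟨diagonal x⁻¹ * centeringMatrix (Fin n) * diagonal x⁻¹, ?_, ?_, ?_, ?_⟩
  · simpa using posSemidef_centeringMatrix.conjTranspose_mul_mul_same (diagonal x⁻¹)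
  · simp [det_centeringMatrix]
  · rw [rank_mul_eq_left_of_isUnit_det _ _ hD, rank_mul_eq_right_of_isUnit_det _ _ hD,
      rank_centeringMatrix, Fintype.card_fin]
  · rw [hadamard_add, diagonal_mul_mul_diagonal_hadamard_vecMulVec,
      diagonal_mul_mul_diagonal_hadamard_vecMulVec, hxx]
    simpa using posDef_centeringMatrix_add_diagonal_mul_mul_diagonal hyx
end

section
/- Let T : S_n(ℝ) → S_n(ℝ) be a linear transformation such that T(A) is positive definite whenever A is positive definite, and such that rank T(E_ii) = 1 for every i = 1, …, n. Then there exist an invertible n×n real matrix W and a positive semi-definite real symmetric matrix H whose diagonal entries are all equal to 1, such that T(A) = W (H ∘ A) Wᵗ for every A ∈ S_n(ℝ). -/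
/-!
A linear map preserving positive definiteness also preserves positive semidefiniteness (add `ε I`
and let `ε → 0`), so each `T(E_ii)` is a positive semidefinite matrix of rank one, `w_i w_iᵀ`.
The matrix `W` with columns `w_i` satisfies `W Wᵀ = T(I)`, which is positive definite, so `W` is
invertible and `S(A) = W⁻¹ T(A) W⁻ᵀ` is a positivity preserving map fixing every `E_ii`.
For `i ≠ j` and real `t`, `S((e_i + t e_j)(e_i + t e_j)ᵀ) = E_ii + t² E_jj + t S(E_ij + E_ji)` is
positive semidefinite; letting `t` range over `ℝ` kills the diagonal of `S(E_ij + E_ji)`, and a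
positive semidefinite matrix with a zero diagonal entry has a zero row and column there.
So `S(E_ij + E_ji)` lives on the entries `(i, j)` and `(j, i)`, which makes `S` a Hadamard
multiplier `A ↦ H ∘ A`; finally `H = S(J)` for the all-ones matrix `J = 𝟙𝟙ᵀ` is positive
semidefinite.
-/

open Matrix

/-- The space `Sₙ(ℝ)` of `n × n` real symmetric matrices, as a submodule of the space of
all `n × n` real matrices. -/
def SymMat (n : ℕ) : Submodule ℝ (Matrix (Fin n) (Fin n) ℝ) where
  carrier := {A | A.IsSymm}
  add_mem' := fun ha hb => ha.add hb
  zero_mem' := by simp [Matrix.IsSymm]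
  smul_mem' := fun c _ hA => hA.smul c

/-- The matrix unit `E_ii`, as an element of `Sₙ(ℝ)`. -/
def symE (n : ℕ) (i : Fin n) : SymMat n :=
  ⟨Matrix.single i i 1,
    Matrix.IsSymm.ext fun a b => by simp [Matrix.single, and_comm]⟩

open Filter Topology

lemma eq_zero_of_forall_add_mul_nonneg {a b : ℝ} (h : ∀ t : ℝ, 0 ≤ a + t * b) : b = 0 := by
  by_contra hb
  have := h (-(a + 1) / b)
  rw [div_mul_cancel₀ _ hb] at this
  linarith

lemma nonneg_of_forall_pos_add_mul_pos {a b : ℝ} (h : ∀ ε > 0, 0 < a + ε * b) : 0 ≤ a := by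
  have hlim : Tendsto (fun ε => a + ε * b) (𝓝[>] 0) (𝓝 a) := by
    refine Tendsto.mono_left ?_ nhdsWithin_le_nhds
    exact (by fun_prop : Continuous fun ε : ℝ => a + ε * b).tendsto' 0 a (by simp)
  exact ge_of_tendsto hlim (eventually_nhdsWithin_of_forall fun ε hε => (h ε hε).le)

open scoped ComplexOrder

namespace Matrix

variable {ι : Type*} [Fintype ι] [DecidableEq ι]

lemma exists_eq_vecMulVec_of_rank_le_one {m n K : Type*} [Fintype n] [DecidableEq n] [Field K]
    {A : Matrix m n K} (h : A.rank ≤ 1) : ∃ (u : m → K) (v : n → K), A = vecMulVec u v := by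
  obtain ⟨u, hu⟩ :=
    finrank_le_one_iff.1 (show Module.finrank K (LinearMap.range A.mulVecLin) ≤ 1 from h)
  choose c hc using fun j => hu ⟨A.col j, Pi.single j 1, by simp⟩
  refine ⟨u.1, c, ext fun k j => ?_⟩
  have := congrFun (congrArg Subtype.val (hc j)) k
  simp only [SetLike.val_smul, Pi.smul_apply, smul_eq_mul, col_apply] at this
  rw [vecMulVec_apply, ← this, mul_comm]

lemma PosSemidef.exists_eq_vecMulVec_self_of_rank_le_one {M : Matrix ι ι ℝ}
    (hM : M.PosSemidef) (h : M.rank ≤ 1) : ∃ w : ι → ℝ, M = vecMulVec w w := by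
  obtain ⟨u, v, rfl⟩ := exists_eq_vecMulVec_of_rank_le_one h
  obtain rfl | hu := eq_or_ne u 0
  · exact ⟨0, by simp [vecMulVec]⟩
  obtain ⟨k, hk : u k ≠ 0⟩ := Function.ne_iff.1 hu
  have hsymm (l : ι) : u l * v k = u k * v l := by
    simpa [vecMulVec_apply] using (hM.1.apply l k).symm
  have hv : v = (v k / u k) • u := funext fun l => by
    rw [Pi.smul_apply, smul_eq_mul, div_mul_eq_mul_div, eq_div_iff hk]
    linarith [hsymm l]
  have ht : 0 ≤ v k / u k := by
    rw [← mul_div_mul_left (v k) (u k) hk]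
    exact div_nonneg (by simpa [vecMulVec_apply] using hM.diag_nonneg (i := k))
      (mul_self_nonneg _)
  refine ⟨√(v k / u k) • u, ?_⟩
  rw [smul_vecMulVec, vecMulVec_smul, smul_smul, Real.mul_self_sqrt ht, ← vecMulVec_smul, ← hv]

variable {𝕜 : Type*} [RCLike 𝕜] {P : Matrix ι ι 𝕜}

lemma PosSemidef.apply_eq_zero_of_diag_eq_zero_right (hP : P.PosSemidef) {k : ι} (hk : P k k = 0)
    (l : ι) : P l k = 0 := by
  have := (hP.dotProduct_mulVec_zero_iff (Pi.single k 1)).1 (by simpa [mulVec_single_one])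
  simpa [mulVec_single_one] using congrFun this l

lemma PosSemidef.apply_eq_zero_of_diag_eq_zero_left (hP : P.PosSemidef) {k : ι} (hk : P k k = 0)
    (l : ι) : P k l = 0 := by
  rw [← hP.1.apply, hP.apply_eq_zero_of_diag_eq_zero_right hk, star_zero]

lemma mul_single_mul_transpose {m n R : Type*} [Fintype n] [DecidableEq n] [CommSemiring R]
    (W : Matrix m n R) (i : n) : W * single i i (1 : R) * Wᵀ = vecMulVec (W.col i) (W.col i) := by
  rw [single_eq_single_vecMulVec_single, Matrix.mul_assoc, vecMulVec_mul, mul_vecMulVec,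
    mulVec_single_one, single_one_vecMul, row_transpose]

def hadamardLeft {m n R : Type*} [CommSemiring R] (H : Matrix m n R) :
    Matrix m n R →ₗ[R] Matrix m n R where
  toFun := H.hadamard
  map_add' B C := hadamard_add H B C
  map_smul' c B := hadamard_smul H B c

end Matrix

lemma SymMat.mem_iff {n : ℕ} {A : Matrix (Fin n) (Fin n) ℝ} : A ∈ SymMat n ↔ A.IsSymm := Iff.rfl

def symF (n : ℕ) (i j : Fin n) : SymMat n :=
  ⟨single i j 1 + single j i 1, SymMat.mem_iff.2 <| by
    rw [IsSymm, transpose_add, transpose_single, transpose_single, add_comm]⟩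

namespace SymMat

variable {n : ℕ}

lemma coe_symE (i : Fin n) : (symE n i : Matrix (Fin n) (Fin n) ℝ) = single i i 1 := rfl

lemma coe_symF (i j : Fin n) :
    (symF n i j : Matrix (Fin n) (Fin n) ℝ) = single i j 1 + single j i 1 := rfl

lemma symF_comm (i j : Fin n) : symF n i j = symF n j i :=
  Subtype.ext (add_comm _ _)

lemma symF_self (i : Fin n) : symF n i i = (2 : ℝ) • symE n i :=
  Subtype.ext (two_smul ℝ _).symm

lemma coe_sum_symE : ((∑ i, symE n i : SymMat n) : Matrix (Fin n) (Fin n) ℝ) = 1 := by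
  simp [coe_symE, sum_single_one]

lemma eq_smul_sum_symF (A : SymMat n) :
    A = (2⁻¹ : ℝ) • ∑ k, ∑ l, (A : Matrix (Fin n) (Fin n) ℝ) k l • symF n k l := by
  obtain ⟨A, hA⟩ := A
  apply Subtype.ext
  simp only [SetLike.val_smul, AddSubmonoidClass.coe_finsetSum, coe_symF, smul_add,
    Finset.sum_add_distrib, smul_single, smul_eq_mul, mul_one]
  rw [Finset.sum_comm (f := fun k l => single l k (A k l))]
  change _ = _ + (2⁻¹ : ℝ) • ∑ l, ∑ k, single l k (Aᵀ l k)
  rw [← matrix_eq_sum_single, ← matrix_eq_sum_single, hA.eq]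
  module

lemma linearMap_ext_symF {M : Type*} [AddCommMonoid M] [Module ℝ M] {f g : SymMat n →ₗ[ℝ] M}
    (h : ∀ k l, f (symF n k l) = g (symF n k l)) : f = g := by
  ext A
  rw [eq_smul_sum_symF A]
  simp only [map_smul, map_sum, h]

lemma coe_symE_add_smul_symF (i j : Fin n) (t : ℝ) :
    ((symE n i + t ^ 2 • symE n j + t • symF n i j : SymMat n) : Matrix (Fin n) (Fin n) ℝ) =
      vecMulVec (Pi.single i 1 + Pi.single j t) (Pi.single i 1 + Pi.single j t) := by
  have hsingle : (Pi.single j t : Fin n → ℝ) = t • Pi.single j 1 := by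
    rw [← Pi.single_smul, smul_eq_mul, mul_one]
  simp only [Submodule.coe_add, SetLike.val_smul, coe_symE, coe_symF, hsingle, add_vecMulVec,
    vecMulVec_add, smul_vecMulVec, vecMulVec_smul, single_eq_single_vecMulVec_single]
  module

lemma posSemidef_symE (i : Fin n) : (symE n i : Matrix (Fin n) (Fin n) ℝ).PosSemidef := by
  rw [coe_symE, single_eq_single_vecMulVec_single, ← star_trivial (Pi.single i 1)]
  exact posSemidef_vecMulVec_self_star _

def hadamardMultiplier (S : SymMat n →ₗ[ℝ] Matrix (Fin n) (Fin n) ℝ) : Matrix (Fin n) (Fin n) ℝ :=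
  of fun k l => if k = l then 1 else S (symF n k l) k l

section

variable {S : SymMat n →ₗ[ℝ] Matrix (Fin n) (Fin n) ℝ}
  (hS : ∀ A : SymMat n, (A : Matrix (Fin n) (Fin n) ℝ).PosSemidef → (S A).PosSemidef)
  (hE : ∀ i, S (symE n i) = single i i 1)
include hS hE

lemma posSemidef_single_add_smul_map_symF (i j : Fin n) (t : ℝ) :
    (single i i 1 + t ^ 2 • single j j 1 + t • S (symF n i j)).PosSemidef := by
  have := hS (symE n i + t ^ 2 • symE n j + t • symF n i j)
    (by rw [coe_symE_add_smul_symF]; exact posSemidef_vecMulVec_self_star _)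
  rwa [map_add, map_add, map_smul, map_smul, hE, hE] at this

lemma map_symF_apply_self_of_ne {i j k : Fin n} (hk : k ≠ j) : S (symF n i j) k k = 0 := by
  refine eq_zero_of_forall_add_mul_nonneg (a := if k = i then 1 else 0) fun t => ?_
  have := (posSemidef_single_add_smul_map_symF hS hE i j t).diag_nonneg (i := k)
  simpa [single_apply, hk.symm, eq_comm] using this

lemma map_symF_apply_self {i j : Fin n} (hij : i ≠ j) (k : Fin n) : S (symF n i j) k k = 0 := by
  obtain hk | rfl := ne_or_eq k j
  · exact map_symF_apply_self_of_ne hS hE hk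
  · rw [symF_comm]
    exact map_symF_apply_self_of_ne hS hE hij.symm

lemma map_symF_apply_eq_zero_of_ne {i j k : Fin n} (hki : k ≠ i) (hkj : k ≠ j) (l : Fin n) :
    S (symF n i j) l k = 0 ∧ S (symF n i j) k l = 0 := by
  have hP := posSemidef_single_add_smul_map_symF hS hE i j 1
  have hPk : (single i i 1 + (1 : ℝ) ^ 2 • single j j 1 + (1 : ℝ) • S (symF n i j) :
      Matrix (Fin n) (Fin n) ℝ) k k = 0 := by
    simp [hki.symm, hkj.symm, map_symF_apply_self_of_ne hS hE hkj]
  constructor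
  · simpa [single_apply, hki.symm, hkj.symm] using hP.apply_eq_zero_of_diag_eq_zero_right hPk l
  · simpa [single_apply, hki.symm, hkj.symm] using hP.apply_eq_zero_of_diag_eq_zero_left hPk l

lemma map_symF_eq_hadamard (k l : Fin n) :
    S (symF n k l) = hadamardMultiplier S ⊙ (symF n k l : Matrix (Fin n) (Fin n) ℝ) := by
  obtain rfl | hkl := eq_or_ne k l
  · ext a b
    simp only [symF_self, map_smul, hE, SetLike.val_smul, coe_symE, hadamard_apply,
      Matrix.smul_apply, single_apply]
    split_ifs with h
    · simp [hadamardMultiplier, ← h.1, ← h.2]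
    · simp
  ext a b
  rw [hadamard_apply, coe_symF]
  by_cases ha : a ≠ k ∧ a ≠ l
  · simp [(map_symF_apply_eq_zero_of_ne hS hE ha.1 ha.2 b).2, ha.1.symm, ha.2.symm]
  by_cases hb : b ≠ k ∧ b ≠ l
  · simp [(map_symF_apply_eq_zero_of_ne hS hE hb.1 hb.2 a).1, hb.1.symm, hb.2.symm]
  rw [not_and_or, not_not, not_not] at ha hb
  rcases ha with rfl | rfl <;> rcases hb with rfl | rfl
  · simp [map_symF_apply_self hS hE hkl, hkl.symm]
  · simp [hadamardMultiplier, hkl]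
  · rw [symF_comm]
    simp [hadamardMultiplier, hkl.symm]
  · simp [map_symF_apply_self hS hE hkl, hkl]

theorem map_eq_hadamard (A : SymMat n) :
    S A = hadamardMultiplier S ⊙ (A : Matrix (Fin n) (Fin n) ℝ) :=
  LinearMap.congr_fun (linearMap_ext_symF (map_symF_eq_hadamard hS hE)
    (g := (hadamardMultiplier S).hadamardLeft ∘ₗ (SymMat n).subtype)) A

lemma posSemidef_hadamardMultiplier : (hadamardMultiplier S).PosSemidef := by
  let J : SymMat n := ⟨of 1, mem_iff.2 (IsSymm.ext fun _ _ => rfl)⟩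
  have hJ : (J : Matrix (Fin n) (Fin n) ℝ) = vecMulVec 1 (star 1) := by
    ext
    simp [J, vecMulVec]
  simpa [map_eq_hadamard hS hE, J] using hS J (hJ ▸ posSemidef_vecMulVec_self_star 1)

theorem exists_posSemidef_eq_hadamard :
    ∃ H : Matrix (Fin n) (Fin n) ℝ, H.PosSemidef ∧ (∀ i, H i i = 1) ∧
      ∀ A : SymMat n, S A = H ⊙ (A : Matrix (Fin n) (Fin n) ℝ) :=
  ⟨_, posSemidef_hadamardMultiplier hS hE, fun _ => if_pos rfl, map_eq_hadamard hS hE⟩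

end


lemma posSemidef_map_of_posDef_map {m : ℕ} (T : SymMat n →ₗ[ℝ] SymMat m)
    (hT : ∀ A : SymMat n, (A : Matrix (Fin n) (Fin n) ℝ).PosDef →
      (T A : Matrix (Fin m) (Fin m) ℝ).PosDef)
    {A : SymMat n} (hA : (A : Matrix (Fin n) (Fin n) ℝ).PosSemidef) :
    (T A : Matrix (Fin m) (Fin m) ℝ).PosSemidef := by
  refine PosSemidef.of_dotProduct_mulVec_nonneg (isHermitian_iff_isSymm.2 (T A).2) fun x => ?_
  rw [star_trivial]
  obtain rfl | hx := eq_or_ne x 0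
  · simp
  refine nonneg_of_forall_pos_add_mul_pos
    (b := x ⬝ᵥ (T (∑ i, symE n i) : Matrix (Fin m) (Fin m) ℝ) *ᵥ x) fun ε hε => ?_
  have hpd : ((A + ε • ∑ i, symE n i : SymMat n) : Matrix (Fin n) (Fin n) ℝ).PosDef := by
    rw [Submodule.coe_add, SetLike.val_smul, coe_sum_symE]
    exact PosDef.posSemidef_add hA (PosDef.one.smul hε)
  simpa [add_mulVec, smul_mulVec] using (hT _ hpd).dotProduct_mulVec_pos hx

lemma exists_isUnit_map_symE_eq (T : SymMat n →ₗ[ℝ] SymMat n)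
    (hT : ∀ A : SymMat n, (A : Matrix (Fin n) (Fin n) ℝ).PosDef →
      (T A : Matrix (Fin n) (Fin n) ℝ).PosDef)
    (hE : ∀ i, (T (symE n i) : Matrix (Fin n) (Fin n) ℝ).rank ≤ 1) :
    ∃ W : Matrix (Fin n) (Fin n) ℝ, IsUnit W ∧
      ∀ i, (T (symE n i) : Matrix (Fin n) (Fin n) ℝ) = W * single i i 1 * Wᵀ := by
  choose w hw using fun i => (posSemidef_map_of_posDef_map T hT
    (posSemidef_symE i)).exists_eq_vecMulVec_self_of_rank_le_one (hE i)
  set W : Matrix (Fin n) (Fin n) ℝ := of fun k i => w i k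
  have hTE (i : Fin n) : (T (symE n i) : Matrix (Fin n) (Fin n) ℝ) = W * single i i 1 * Wᵀ :=
    (hw i).trans (mul_single_mul_transpose W i).symm
  have hT1 : (T (∑ i, symE n i) : Matrix (Fin n) (Fin n) ℝ) = W * Wᵀ := by
    simp only [map_sum, Submodule.coe_sum, hTE, ← Finset.mul_sum, ← Finset.sum_mul,
      sum_single_one, Matrix.mul_one]
  exact ⟨W, isUnit_of_mul_isUnit_left (hT1 ▸ (hT _ (coe_sum_symE ▸ PosDef.one)).isUnit), hTE⟩

end SymMat

open SymMat in
/-- Let `T : Sₙ(ℝ) → Sₙ(ℝ)` be linear, preserving positive definiteness,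
with `rank T(E_ii) = 1` for all `i`.  Then there exist an invertible matrix `W` and a
positive semi-definite matrix `H` with unit diagonal such that `T(A) = W (H ∘ A) Wᵗ` for
all `A ∈ Sₙ(ℝ)`. -/
theorem stmt6 (n : ℕ) (T : SymMat n →ₗ[ℝ] SymMat n)
    (hT : ∀ A : SymMat n, (A : Matrix (Fin n) (Fin n) ℝ).PosDef →
      ((T A : Matrix (Fin n) (Fin n) ℝ)).PosDef)
    (hE : ∀ i : Fin n, ((T (symE n i) : Matrix (Fin n) (Fin n) ℝ)).rank = 1) :
    ∃ (W H : Matrix (Fin n) (Fin n) ℝ), IsUnit W ∧ H.PosSemidef ∧ (∀ i, H i i = 1) ∧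
      ∀ A : SymMat n,
        (T A : Matrix (Fin n) (Fin n) ℝ) = W * (H.hadamard (A : Matrix (Fin n) (Fin n) ℝ)) * Wᵀ := by
  obtain ⟨W, hW, hTE⟩ := exists_isUnit_map_symE_eq T hT fun i => (hE i).le
  have hdet : IsUnit W.det := (isUnit_iff_isUnit_det W).1 hW
  have hdet' : IsUnit Wᵀ.det := by rwa [det_transpose]
  let S : SymMat n →ₗ[ℝ] Matrix (Fin n) (Fin n) ℝ :=
    (LinearMap.mulLeft ℝ W⁻¹ ∘ₗ LinearMap.mulRight ℝ W⁻¹ᵀ) ∘ₗ (SymMat n).subtype ∘ₗ T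
  have hSE (i : Fin n) : S (symE n i) = single i i 1 := by
    simp [S, hTE, transpose_nonsing_inv, Matrix.mul_assoc, mul_nonsing_inv _ hdet',
      nonsing_inv_mul_cancel_left _ _ hdet]
  have hSPSD (A : SymMat n) (hA : (A : Matrix (Fin n) (Fin n) ℝ).PosSemidef) :
      (S A).PosSemidef := by
    simpa [S, Matrix.mul_assoc, conjTranspose_eq_transpose_of_trivial] using
      (posSemidef_map_of_posDef_map T hT hA).mul_mul_conjTranspose_same W⁻¹
  obtain ⟨H, hH, hdiag, hS⟩ := exists_posSemidef_eq_hadamard hSPSD hSE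
  refine ⟨W, H, hW, hH, hdiag, fun A => ?_⟩
  rw [← hS A]
  simp [S, transpose_nonsing_inv, ← Matrix.mul_assoc, mul_nonsing_inv _ hdet,
    nonsing_inv_mul_cancel_right _ _ hdet']
end

section
/- Let T : S_n(ℝ) → S_n(ℝ) be a linear transformation such that T(A) is positive definite whenever A is positive definite. Then the following are equivalent: (i) for every A ∈ S_n(ℝ), if T(A) is positive definite then A is positive definite; (ii) for every A ∈ S_n(ℝ), if T(A) is invertible then A is invertible. -/
/-!
(ii) ⇒ (i): if `T A` is positive definite, so is `T ((1 - t) • 1 + t • A) = (1 - t) • T 1 + t • T A`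
for `t ∈ (0, 1]`, so by (ii) the segment from `1` to `A` contains no singular matrix. An eigenvalue
`λ ≤ 0` of `A` would make `(1 - t) • 1 + t • A` singular at `t = 1 / (1 - λ)`.

(i) ⇒ (ii): `T` maps positive semidefinite matrices to positive semidefinite ones (they are limits
of positive definite ones), and by (i) it maps singular ones among them to singular ones. If `A` is
singular, write `A = U diag(λ) Uᵀ` and put `C = U diag|λ| Uᵀ`; for `u ≥ 1` the matrix `A + u • C` is
positive semidefinite and singular. Hence the polynomial `u ↦ det (T A + u • T C)` has infinitely
many roots, so it vanishes identically, in particular at `u = 0`.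
-/

open Matrix

open Polynomial Filter Topology Unitary

namespace Matrix

variable {ι : Type*} [Fintype ι]

theorem PosSemidef.of_forall_posDef_add_smul {M N : Matrix ι ι ℝ} (hM : M.IsHermitian)
    (h : ∀ s : ℝ, 0 < s → (M + s • N).PosDef) : M.PosSemidef := by
  refine PosSemidef.of_dotProduct_mulVec_nonneg hM fun x => ?_
  have hlim : Tendsto (fun s : ℝ => star x ⬝ᵥ ((M + s • N) *ᵥ x)) (𝓝[>] 0)
      (𝓝 (star x ⬝ᵥ (M *ᵥ x))) := by
    refine tendsto_nhdsWithin_of_tendsto_nhds ?_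
    have : Continuous fun s : ℝ => star x ⬝ᵥ ((M + s • N) *ᵥ x) := by
      simp only [add_mulVec, smul_mulVec, dotProduct_add, dotProduct_smul]
      fun_prop
    simpa using this.tendsto 0
  refine ge_of_tendsto hlim (eventually_nhdsWithin_of_forall fun s hs => ?_)
  by_cases hx : x = 0
  · simp [hx]
  · exact (h s hs).dotProduct_mulVec_pos hx |>.le

variable [DecidableEq ι]

theorem det_conjStarAlgAut {R : Type*} [CommRing R] [StarRing R] (U : unitaryGroup ι R)
    (M : Matrix ι ι R) : (conjStarAlgAut R (Matrix ι ι R) U M).det = M.det :=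
  det_conj_of_mul_eq_one (Unitary.coe_mul_star_self U) (Unitary.coe_star_mul_self U)

theorem det_eq_zero_of_infinite_setOf_det_add_smul_eq_zero {R : Type*} [CommRing R] [IsDomain R]
    {A B : Matrix ι ι R} (h : {u : R | (A + u • B).det = 0}.Infinite) : A.det = 0 := by
  set p : R[X] := (A.map C + (X : R[X]) • B.map C).det
  have hp : ∀ u, p.eval u = (A + u • B).det := fun u => by
    rw [← coe_evalRingHom, RingHom.map_det]
    congr 1
    ext i j
    simp only [RingHom.mapMatrix_apply, map_apply, add_apply, smul_apply, smul_eq_mul,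
      coe_evalRingHom, eval_add, eval_mul, eval_C, eval_X]
  have hp0 : p = 0 := eq_zero_of_infinite_isRoot p (h.mono fun u hu => (hp u).trans hu)
  simpa [hp0] using (hp 0).symm

namespace IsHermitian

variable {A : Matrix ι ι ℝ}

theorem exists_eq_conjStarAlgAut_diagonal (hA : A.IsHermitian) :
    ∃ (U : unitaryGroup ι ℝ) (d : ι → ℝ), A = conjStarAlgAut ℝ _ U (diagonal d) :=
  ⟨hA.eigenvectorUnitary, hA.eigenvalues, by simpa using hA.spectral_theorem⟩

theorem exists_isSymm_forall_posSemidef_and_det_add_smul_eq_zero (hA : A.IsHermitian) (hdet : A.det = 0) :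
    ∃ C : Matrix ι ι ℝ, C.IsSymm ∧
      ∀ u : ℝ, 1 ≤ u → (A + u • C).PosSemidef ∧ (A + u • C).det = 0 := by
  obtain ⟨U, d, rfl⟩ := hA.exists_eq_conjStarAlgAut_diagonal
  set φ := conjStarAlgAut ℝ (Matrix ι ι ℝ) U
  obtain ⟨i, -, hi⟩ : ∃ i ∈ Finset.univ, d i = 0 := by
    rwa [← Finset.prod_eq_zero_iff, ← det_diagonal, ← det_conjStarAlgAut U]
  have hpsd {e : ι → ℝ} (he : 0 ≤ e) : (φ (diagonal e)).PosSemidef :=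
    Unitary.isUnit_coe.posSemidef_star_right_conjugate_iff.2 (PosSemidef.diagonal he)
  refine ⟨φ (diagonal |d|), isHermitian_iff_isSymm.1 (hpsd (abs_nonneg d)).isHermitian,
    fun u hu => ?_⟩
  rw [← map_smul, ← map_add, ← diagonal_smul, diagonal_add, det_conjStarAlgAut, det_diagonal]
  refine ⟨hpsd fun j => ?_, Finset.prod_eq_zero (Finset.mem_univ i) (by simp [hi])⟩
  simp only [Pi.zero_apply, Pi.smul_apply, Pi.abs_apply, smul_eq_mul]
  have := mul_le_mul_of_nonneg_right hu (abs_nonneg (d j))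
  linarith [neg_abs_le (d j)]

theorem posDef_of_forall_det_one_sub_smul_add_smul_ne_zero (hA : A.IsHermitian)
    (h : ∀ t ∈ Set.Ioc (0 : ℝ) 1, ((1 - t) • 1 + t • A).det ≠ 0) : A.PosDef := by
  obtain ⟨U, d, rfl⟩ := hA.exists_eq_conjStarAlgAut_diagonal
  set φ := conjStarAlgAut ℝ (Matrix ι ι ℝ) U
  rw [conjStarAlgAut_apply, Unitary.isUnit_coe.posDef_star_right_conjugate_iff,
    posDef_diagonal_iff]
  intro i
  by_contra! hi
  have hpos : 0 < 1 - d i := by linarith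
  apply h (1 - d i)⁻¹ ⟨inv_pos.2 hpos, inv_le_one_of_one_le₀ (by linarith)⟩
  rw [← map_one φ, ← map_smul, ← map_smul, ← map_add, ← diagonal_one, ← diagonal_smul,
    ← diagonal_smul, diagonal_add, det_conjStarAlgAut, det_diagonal]
  refine Finset.prod_eq_zero (Finset.mem_univ i) ?_
  simp only [Pi.smul_apply, smul_eq_mul]
  field_simp
  ring

end IsHermitian

end Matrix

namespace SymMat

variable {n : ℕ}

instance : One (SymMat n) := ⟨⟨1, isSymm_one⟩⟩

@[simp]
theorem coe_one : ((1 : SymMat n) : Matrix (Fin n) (Fin n) ℝ) = 1 := rfl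

def PreservesPosDef (T : SymMat n →ₗ[ℝ] SymMat n) : Prop :=
  ∀ A : SymMat n, (A : Matrix (Fin n) (Fin n) ℝ).PosDef → (T A : Matrix (Fin n) (Fin n) ℝ).PosDef

def ReflectsPosDef (T : SymMat n →ₗ[ℝ] SymMat n) : Prop :=
  ∀ A : SymMat n, (T A : Matrix (Fin n) (Fin n) ℝ).PosDef → (A : Matrix (Fin n) (Fin n) ℝ).PosDef

def ReflectsNonsingular (T : SymMat n →ₗ[ℝ] SymMat n) : Prop :=
  ∀ A : SymMat n, (T A : Matrix (Fin n) (Fin n) ℝ).det ≠ 0 → (A : Matrix (Fin n) (Fin n) ℝ).det ≠ 0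

variable {T : SymMat n →ₗ[ℝ] SymMat n}

theorem PreservesPosDef.posSemidef_map (hT : PreservesPosDef T) {A : SymMat n}
    (hA : (A : Matrix (Fin n) (Fin n) ℝ).PosSemidef) :
    (T A : Matrix (Fin n) (Fin n) ℝ).PosSemidef := by
  refine .of_forall_posDef_add_smul (N := T 1) (isHermitian_iff_isSymm.2 (T A).2) fun s hs => ?_
  simpa using hT (A + s • 1) (PosDef.posSemidef_add hA (PosDef.one.smul hs))

theorem ReflectsPosDef.det_map_eq_zero_of_posSemidef (hT' : ReflectsPosDef T)
    (hT : PreservesPosDef T) {A : SymMat n} (hA : (A : Matrix (Fin n) (Fin n) ℝ).PosSemidef)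
    (hdet : (A : Matrix (Fin n) (Fin n) ℝ).det = 0) :
    (T A : Matrix (Fin n) (Fin n) ℝ).det = 0 := by
  by_contra hTA
  have hA' := hT' A ((hT.posSemidef_map hA).posDef_iff_det_ne_zero.2 hTA)
  exact hA'.det_pos.ne' hdet

theorem ReflectsPosDef.reflectsNonsingular (hT' : ReflectsPosDef T) (hT : PreservesPosDef T) :
    ReflectsNonsingular T := by
  intro A hTA hA
  obtain ⟨C, hC, hray⟩ :=
    (isHermitian_iff_isSymm.2 A.2).exists_isSymm_forall_posSemidef_and_det_add_smul_eq_zero hA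
  refine hTA (det_eq_zero_of_infinite_setOf_det_add_smul_eq_zero
    (B := T ⟨C, hC⟩) ((Set.Ici_infinite 1).mono fun u hu => ?_))
  obtain ⟨hpsd, hdet⟩ := hray u hu
  simpa using hT'.det_map_eq_zero_of_posSemidef hT (A := A + u • ⟨C, hC⟩)
    (by simpa using hpsd) (by simpa using hdet)

theorem ReflectsNonsingular.reflectsPosDef (hT' : ReflectsNonsingular T)
    (hT : PreservesPosDef T) : ReflectsPosDef T := by
  intro A hTA
  refine (isHermitian_iff_isSymm.2 A.2).posDef_of_forall_det_one_sub_smul_add_smul_ne_zero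
    fun t ht => ?_
  have hseg : (T ((1 - t) • 1 + t • A) : Matrix (Fin n) (Fin n) ℝ).PosDef := by
    simpa using PosDef.posSemidef_add ((hT 1 PosDef.one).posSemidef.smul (sub_nonneg.2 ht.2))
      (hTA.smul ht.1)
  simpa using hT' _ hseg.det_pos.ne'

end SymMat

open SymMat

/-- Let `T : Sₙ(ℝ) → Sₙ(ℝ)` be linear and preserve positive definiteness.
Then `T(A)` positive definite implies `A` positive definite (for all `A`) if and only if
`det T(A) ≠ 0` implies `det A ≠ 0` (for all `A`), i.e. `T` preserves singularity. -/
theorem stmt10 (n : ℕ) (T : SymMat n →ₗ[ℝ] SymMat n)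
    (hT : ∀ A : SymMat n, (A : Matrix (Fin n) (Fin n) ℝ).PosDef →
      ((T A : Matrix (Fin n) (Fin n) ℝ)).PosDef) :
    (∀ A : SymMat n, ((T A : Matrix (Fin n) (Fin n) ℝ)).PosDef →
        (A : Matrix (Fin n) (Fin n) ℝ).PosDef) ↔
    (∀ A : SymMat n, ((T A : Matrix (Fin n) (Fin n) ℝ)).det ≠ 0 →
        (A : Matrix (Fin n) (Fin n) ℝ).det ≠ 0) :=
  ⟨fun hT' => ReflectsPosDef.reflectsNonsingular hT' hT,
    fun hT' => ReflectsNonsingular.reflectsPosDef hT' hT⟩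
end

section
/- Let T : S_n(ℝ) → S_n(ℝ) be a linear transformation such that T(A) is positive definite whenever A is positive definite, and let 𝒜 denote the set of positive definite matrices in S_n(ℝ). Then the following are equivalent: (i) for every A ∈ S_n(ℝ), if T(A) is positive definite then A is positive definite; (ii) T(𝒜) = 𝒜, i.e. the image under T of the set of positive definite symmetric matrices equals the set of positive definite symmetric matrices. -/
/-! If `T` reflects positive definiteness and `T C = 0`, then `T (1 + t • C) = T 1` is positive
definite for every real `t`, so the positive definite cone `𝒜` contains the whole line
`1 + t • C`; since `𝒜` contains no line, `C = 0`. Thus `T` is injective, hence bijective, and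
`T(𝒜) = 𝒜`. Conversely, `𝒜` spans `Sₙ(ℝ)` (every symmetric `S` is `(S + c • 1) - c • 1` for `c`
large), so `T(𝒜) = 𝒜` makes `T` surjective, hence injective, and then `T A ∈ 𝒜 = T(𝒜)` forces
`A ∈ 𝒜`. -/

open Matrix

open scoped ComplexOrder MatrixOrder

lemma eq_zero_of_forall_add_mul_pos {K : Type*} [Field K] [LinearOrder K] [IsStrictOrderedRing K]
    {a b : K} (h : ∀ t, 0 < a + t * b) : b = 0 := by
  by_contra hb
  have := h (-(a + 1) / b)
  rw [div_mul_cancel₀ _ hb] at this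
  linarith

namespace LinearMap
variable {K V : Type*} [Field K] [AddCommGroup V] [Module K V] {T : V →ₗ[K] V} {P : Set V}

lemma injective_of_preimage_subset (hne : (T ⁻¹' P).Nonempty)
    (hline : ∀ v c, (∀ t : K, v + t • c ∈ P) → c = 0) (h : T ⁻¹' P ⊆ P) :
    Function.Injective T := by
  obtain ⟨v, hv⟩ := hne
  refine (injective_iff_map_eq_zero T).mpr fun c hc => hline v c fun t => h ?_
  simpa [hc] using hv

variable [FiniteDimensional K V]

lemma image_eq_of_preimage_subset (hmaps : Set.MapsTo T P P) (hne : P.Nonempty)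
    (hline : ∀ v c, (∀ t : K, v + t • c ∈ P) → c = 0) (h : T ⁻¹' P ⊆ P) : T '' P = P := by
  have hsurj : Function.Surjective T := injective_iff_surjective.mp <|
    injective_of_preimage_subset (hne.mono fun _ hv => hmaps hv) hline h
  refine subset_antisymm hmaps.image_subset fun w hw => ?_
  obtain ⟨v, rfl⟩ := hsurj w
  exact ⟨v, h hw, rfl⟩

lemma preimage_subset_of_image_eq (hspan : Submodule.span K P = ⊤) (h : T '' P = P) :
    T ⁻¹' P ⊆ P := by
  have hsurj : Function.Surjective T := by
    rw [← range_eq_top, eq_top_iff, ← hspan, Submodule.span_le, ← h]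
    exact Set.image_subset_range T P
  intro v hv
  rw [Set.mem_preimage, ← h] at hv
  obtain ⟨u, hu, huv⟩ := hv
  rwa [← injective_iff_surjective.mpr hsurj huv]

end LinearMap

namespace Matrix
variable {ι 𝕜 : Type*} [Fintype ι] [RCLike 𝕜]

lemma IsHermitian.exists_posDef_add_smul_one [DecidableEq ι] {A : Matrix ι ι 𝕜}
    (hA : A.IsHermitian) : ∃ c : ℝ, 0 < c ∧ (A + c • 1).PosDef := by
  obtain ⟨b, hb⟩ := (Set.finite_range (-hA.eigenvalues)).bddAbove
  set c := max b 0 + 1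
  refine ⟨c, by positivity, ?_⟩
  set U := hA.eigenvectorUnitary
  have hshift : A + c • 1 =
      (U : Matrix ι ι 𝕜) * diagonal (RCLike.ofReal ∘ (hA.eigenvalues + fun _ => c)) *
        star (U : Matrix ι ι 𝕜) := by
    have hdiag : diagonal (RCLike.ofReal ∘ (hA.eigenvalues + fun _ => c)) =
        diagonal (RCLike.ofReal ∘ hA.eigenvalues) + c • (1 : Matrix ι ι 𝕜) := by
      ext i j
      by_cases h : i = j <;> simp [h, RCLike.real_smul_eq_coe_mul]
    conv_lhs => rw [hA.spectral_theorem, Unitary.conjStarAlgAut_apply]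
    rw [hdiag, mul_add, add_mul, mul_smul_comm, smul_mul_assoc, mul_one,
      Unitary.mul_star_self_of_mem U.2]
  rw [hshift, Unitary.isUnit_coe.posDef_star_right_conjugate_iff, posDef_diagonal_iff]
  intro i
  have hbi : -hA.eigenvalues i ≤ b := hb ⟨i, rfl⟩
  simp only [Function.comp_apply, Pi.add_apply, RCLike.ofReal_pos]
  linarith [le_max_left b 0]

lemma eq_zero_of_forall_posDef_add_smul {M C : Matrix ι ι 𝕜} (hC : C.IsHermitian)
    (h : ∀ t : ℝ, (M + t • C).PosDef) : C = 0 := by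
  have hq : ∀ x, star x ⬝ᵥ (C *ᵥ x) = 0 := by
    intro x
    rcases eq_or_ne x 0 with rfl | hx
    · simp
    have hpos : ∀ t : ℝ, 0 < star x ⬝ᵥ (M *ᵥ x) + t * star x ⬝ᵥ (C *ᵥ x) := fun t => by
      simpa [add_mulVec, smul_mulVec, RCLike.real_smul_eq_coe_mul] using
        (h t).dotProduct_mulVec_pos hx
    replace hpos := fun t => RCLike.pos_iff.mp (hpos t)
    simp only [map_add, RCLike.re_ofReal_mul, RCLike.im_ofReal_mul] at hpos
    refine RCLike.ext ?_ ?_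
    · simpa using eq_zero_of_forall_add_mul_pos fun t => (hpos t).1
    · rw [map_zero]
      linear_combination (hpos 1).2 - (hpos 0).2
  have hC₀ : C.PosSemidef := .of_dotProduct_mulVec_nonneg hC fun x => (hq x).ge
  have hC₀' : (-C).PosSemidef := .of_dotProduct_mulVec_nonneg hC.neg fun x => by
    simp [neg_mulVec, hq x]
  exact le_antisymm (by simpa [le_iff] using hC₀') hC₀.nonneg

end Matrix

namespace SymMat

def posDefCone (n : ℕ) : Set (SymMat n) := {A | (A : Matrix (Fin n) (Fin n) ℝ).PosDef}

lemma one_mem_posDefCone (n : ℕ) : ⟨1, isSymm_one⟩ ∈ posDefCone n := PosDef.one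

lemma eq_zero_of_forall_add_smul_mem_posDefCone {n : ℕ} (A C : SymMat n)
    (h : ∀ t : ℝ, A + t • C ∈ posDefCone n) : C = 0 :=
  Subtype.ext <| eq_zero_of_forall_posDef_add_smul (isHermitian_iff_isSymm.mpr C.2) h

lemma span_posDefCone (n : ℕ) : Submodule.span ℝ (posDefCone n) = ⊤ := by
  refine eq_top_iff.mpr fun S _ => ?_
  obtain ⟨c, hc, hSc⟩ := (isHermitian_iff_isSymm.mpr S.2).exists_posDef_add_smul_one
  have hone : c • ⟨1, isSymm_one⟩ ∈ posDefCone n := (one_mem_posDefCone n).smul hc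
  rw [← add_sub_cancel_right S (c • ⟨1, isSymm_one⟩)]
  exact sub_mem (Submodule.subset_span hSc) (Submodule.subset_span hone)

end SymMat

/-- Let `T : Sₙ(ℝ) → Sₙ(ℝ)` be linear and preserve positive definiteness,
and let `𝒜` be the set of positive definite matrices in `Sₙ(ℝ)`.  Then `T(A)` positive
definite implies `A` positive definite (for all `A`) if and only if `T(𝒜) = 𝒜`. -/
theorem stmt12 (n : ℕ) (T : SymMat n →ₗ[ℝ] SymMat n)
    (hT : ∀ A : SymMat n, (A : Matrix (Fin n) (Fin n) ℝ).PosDef →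
      ((T A : Matrix (Fin n) (Fin n) ℝ)).PosDef) :
    (∀ A : SymMat n, ((T A : Matrix (Fin n) (Fin n) ℝ)).PosDef →
        (A : Matrix (Fin n) (Fin n) ℝ).PosDef) ↔
    (T '' {A : SymMat n | (A : Matrix (Fin n) (Fin n) ℝ).PosDef} =
      {A : SymMat n | (A : Matrix (Fin n) (Fin n) ℝ).PosDef}) :=
  ⟨LinearMap.image_eq_of_preimage_subset (P := SymMat.posDefCone n) hT
      ⟨_, SymMat.one_mem_posDefCone n⟩ SymMat.eq_zero_of_forall_add_smul_mem_posDefCone,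
    LinearMap.preimage_subset_of_image_eq (SymMat.span_posDefCone n)⟩
end

section
/- Let T : S_n(ℝ) → S_n(ℝ) be a linear transformation such that T(A) is positive definite whenever A is positive definite, and such that T(E_ii) = E_ii for every i = 1, …, n. Then there exists a positive semi-definite real symmetric matrix H with all diagonal entries equal to 1 such that T(A) = H ∘ A for every A ∈ S_n(ℝ); moreover H = T(𝟏), where 𝟏 is the n×n matrix all of whose entries equal 1. -/
open Matrix

/-- The all-ones matrix `𝟏`, as an element of `Sₙ(ℝ)`. -/
def symOnes (n : ℕ) : SymMat n :=
  ⟨Matrix.of fun _ _ => (1 : ℝ), Matrix.IsSymm.ext fun _ _ => rfl⟩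

/-
Since `T` fixes `I = ∑ E_ii`, positivity of `T` on positive definite matrices extends, through
`A + εI`, to positive semidefinite ones. For `k ≠ l` put `G_kl = E_kl + E_lk`. The rank-one matrix
`(ε e_k + e_l)(ε e_k + e_l)ᵀ = ε² E_kk + ε G_kl + E_ll` is positive semidefinite for every real `ε`,
hence so is `ε² E_kk + ε T(G_kl) + E_ll`. Its quadratic form at `x` is a quadratic in `ε` with
nonpositive discriminant, so the form of `T(G_kl)` vanishes whenever `x_k x_l = 0`; by polarization
`T(G_kl) = h_kl G_kl`. Expanding `A = ½ ∑ A_kl G_kl` gives `T(A) = H ∘ A`, so `H = T(𝟏)`, which is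
positive semidefinite because `𝟏 = 𝟙𝟙ᵀ` is.
-/

namespace Matrix

theorem IsSymm.hadamard {ι α : Type*} [Mul α] {A B : Matrix ι ι α} (hA : A.IsSymm)
    (hB : B.IsSymm) : (A ⊙ B).IsSymm := by
  rw [IsSymm, transpose_hadamard, hA.eq, hB.eq]

variable {ι : Type*} [Fintype ι] [DecidableEq ι]

theorem posSemidef_of_forall_posDef_add_smul_one {M : Matrix ι ι ℝ}
    (h : ∀ ε : ℝ, 0 < ε → (M + ε • 1).PosDef) : M.PosSemidef := by
  have hM : M.IsHermitian := by
    simpa using (h 1 one_pos).isHermitian.sub (isHermitian_one (α := ℝ))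
  refine .of_dotProduct_mulVec_nonneg hM fun x => le_of_forall_pos_le_add fun δ hδ => ?_
  have hxx : 0 ≤ x ⬝ᵥ x := by simpa using dotProduct_star_self_nonneg x
  have hc : 0 < x ⬝ᵥ x + 1 := by linarith
  have hε := (h (δ / (x ⬝ᵥ x + 1)) (by positivity)).posSemidef.dotProduct_mulVec_nonneg x
  have hfrac : δ / (x ⬝ᵥ x + 1) * (x ⬝ᵥ x) ≤ δ := by
    rw [div_mul_eq_mul_div, div_le_iff₀ hc]
    nlinarith
  simp only [add_mulVec, smul_mulVec, one_mulVec, dotProduct_add, dotProduct_smul,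
    smul_eq_mul, star_trivial] at hε ⊢
  linarith

theorem dotProduct_single_one_mulVec {R : Type*} [CommSemiring R] (x : ι → R) (i j : ι) :
    x ⬝ᵥ single i j 1 *ᵥ x = x i * x j := by
  simp [single_mulVec_eq, dotProduct_single, mul_comm]

theorem IsSymm.apply_eq_zero_of_dotProduct_mulVec_single {B : Matrix ι ι ℝ} (hB : B.IsSymm)
    {q r : ι} (hq : Pi.single q 1 ⬝ᵥ B *ᵥ Pi.single q 1 = 0)
    (hr : Pi.single r 1 ⬝ᵥ B *ᵥ Pi.single r 1 = 0)
    (hqr : (Pi.single q 1 + Pi.single r 1) ⬝ᵥ B *ᵥ (Pi.single q 1 + Pi.single r 1) = 0) :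
    B q r = 0 := by
  simp only [mulVec_add, add_dotProduct, dotProduct_add, mulVec_single_one,
    single_dotProduct, one_mul, col_apply] at hq hr hqr
  linarith [hB.apply q r]

theorem IsSymm.eq_apply_smul_of_forall_posSemidef {B : Matrix ι ι ℝ} (hB : B.IsSymm) {k l : ι}
    (hkl : k ≠ l) (h : ∀ ε : ℝ, (ε ^ 2 • single k k 1 + ε • B + single l l 1).PosSemidef) :
    B = B k l • (single k l 1 + single l k 1) := by
  have hquad : ∀ x : ι → ℝ, x k * x l = 0 → x ⬝ᵥ B *ᵥ x = 0 := by
    intro x hx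
    have hdisc := discrim_le_zero (a := x k * x k) (b := x ⬝ᵥ B *ᵥ x) (c := x l * x l) fun ε => by
      have hε := (h ε).dotProduct_mulVec_nonneg x
      simp only [add_mulVec, smul_mulVec, dotProduct_add, dotProduct_smul, smul_eq_mul,
        dotProduct_single_one_mulVec, star_trivial] at hε
      linarith
    have hprod : x k * x k * (x l * x l) = 0 := by rw [mul_mul_mul_comm, hx, zero_mul]
    rw [discrim] at hdisc
    nlinarith
  ext q r
  by_cases hqr : q = k ∧ r = l
  · obtain ⟨rfl, rfl⟩ := hqr
    simp [hkl]
  by_cases hrq : q = l ∧ r = k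
  · obtain ⟨rfl, rfl⟩ := hrq
    simp [hkl, hB.apply q r]
  have hsingle : ∀ s : ι, (Pi.single s 1 : ι → ℝ) k * (Pi.single s 1 : ι → ℝ) l = 0 := by
    intro s
    by_cases hs : s = k <;> simp [Pi.single_apply, hs, hkl]
  have hpair : (Pi.single q 1 + Pi.single r 1 : ι → ℝ) k *
      (Pi.single q 1 + Pi.single r 1 : ι → ℝ) l = 0 := by
    simp only [Pi.add_apply, Pi.single_apply]
    split_ifs <;> simp_all
  rw [hB.apply_eq_zero_of_dotProduct_mulVec_single (hquad _ (hsingle q)) (hquad _ (hsingle r))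
    (hquad _ hpair)]
  have hG : (single k l 1 + single l k 1 : Matrix ι ι ℝ) q r = 0 := by
    simp only [add_apply, single_apply]
    split_ifs <;> simp_all
  rw [smul_apply, hG, smul_zero]

end Matrix

def symSingle (n : ℕ) (i j : Fin n) : SymMat n :=
  ⟨single i j 1 + single j i 1, IsSymm.ext fun a b => by simp [single, and_comm, add_comm]⟩

section SymMat

variable {n : ℕ}

@[simp]
lemma coe_symSingle (i j : Fin n) :
    (symSingle n i j : Matrix (Fin n) (Fin n) ℝ) = single i j 1 + single j i 1 := rfl

@[simp]
lemma coe_symE (i : Fin n) : (symE n i : Matrix (Fin n) (Fin n) ℝ) = single i i 1 := rfl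

lemma symSingle_comm (i j : Fin n) : symSingle n i j = symSingle n j i :=
  Subtype.ext (add_comm _ _)

lemma symSingle_self (i : Fin n) : symSingle n i i = (2 : ℝ) • symE n i :=
  Subtype.ext (two_smul ℝ _).symm

lemma coe_sum_symE : ((∑ i, symE n i : SymMat n) : Matrix (Fin n) (Fin n) ℝ) = 1 := by
  simp [sum_single_eq_diagonal]

lemma sum_sum_smul_symSingle (A : SymMat n) :
    (2⁻¹ : ℝ) • ∑ i, ∑ j, (A : Matrix (Fin n) (Fin n) ℝ) i j • symSingle n i j = A := by
  apply Subtype.ext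
  ext q r
  simp only [SetLike.val_smul, AddSubmonoidClass.coe_finsetSum, coe_symSingle, smul_add,
    smul_single, smul_eq_mul, mul_one, Finset.sum_add_distrib, Matrix.smul_apply,
    Matrix.add_apply, Matrix.sum_apply, single_apply, ite_and, Finset.sum_ite_irrel,
    Finset.sum_ite_eq', Finset.mem_univ, ↓reduceIte, Finset.sum_const_zero, A.2.apply r q]
  ring

lemma posSemidef_map_of_posDef {T : SymMat n →ₗ[ℝ] SymMat n}
    (hT : ∀ A : SymMat n, (A : Matrix (Fin n) (Fin n) ℝ).PosDef →
      (T A : Matrix (Fin n) (Fin n) ℝ).PosDef)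
    (hI : T (∑ i, symE n i) = ∑ i, symE n i) {A : SymMat n}
    (hA : (A : Matrix (Fin n) (Fin n) ℝ).PosSemidef) :
    (T A : Matrix (Fin n) (Fin n) ℝ).PosSemidef := by
  refine posSemidef_of_forall_posDef_add_smul_one fun ε hε => ?_
  have hcoe : ∀ B : SymMat n,
      ((B + ε • ∑ i, symE n i : SymMat n) : Matrix (Fin n) (Fin n) ℝ) = B + ε • 1 := fun B => by
    rw [Submodule.coe_add, Submodule.coe_smul, coe_sum_symE]
  have hPD := hT _ ((hcoe A).symm ▸ PosDef.posSemidef_add hA (PosDef.one.smul hε))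
  rwa [map_add, map_smul, hI, hcoe] at hPD

theorem map_symSingle_eq_smul {T : SymMat n →ₗ[ℝ] SymMat n}
    (hT : ∀ A : SymMat n, (A : Matrix (Fin n) (Fin n) ℝ).PosDef →
      (T A : Matrix (Fin n) (Fin n) ℝ).PosDef)
    (hE : ∀ i : Fin n, T (symE n i) = symE n i) {k l : Fin n} (hkl : k ≠ l) :
    T (symSingle n k l) =
      (T (symSingle n k l) : Matrix (Fin n) (Fin n) ℝ) k l • symSingle n k l := by
  have hI : T (∑ i, symE n i) = ∑ i, symE n i := by simp [hE]
  refine Subtype.ext <| (T (symSingle n k l)).2.eq_apply_smul_of_forall_posSemidef hkl fun ε => ?_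
  have hv : ((ε ^ 2 • symE n k + ε • symSingle n k l + symE n l : SymMat n) :
      Matrix (Fin n) (Fin n) ℝ).PosSemidef := by
    convert posSemidef_vecMulVec_self_star (ε • Pi.single k 1 + Pi.single l 1 : Fin n → ℝ) using 1
    ext q r
    simp only [Submodule.coe_add, Submodule.coe_smul, coe_symE, coe_symSingle, Matrix.add_apply,
      Matrix.smul_apply, single_apply, vecMulVec_apply, Pi.add_apply, Pi.smul_apply,
      Pi.single_apply, star_trivial, eq_comm (a := k), eq_comm (a := l)]
    by_cases hq : q = k <;> by_cases hr : r = k <;> by_cases hq' : q = l <;>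
      by_cases hr' : r = l <;> simp_all [sq]
  simpa [hE] using posSemidef_map_of_posDef hT hI hv

theorem exists_isSymm_map_symSingle_eq_smul {T : SymMat n →ₗ[ℝ] SymMat n}
    (hT : ∀ A : SymMat n, (A : Matrix (Fin n) (Fin n) ℝ).PosDef →
      (T A : Matrix (Fin n) (Fin n) ℝ).PosDef)
    (hE : ∀ i : Fin n, T (symE n i) = symE n i) :
    ∃ H : Matrix (Fin n) (Fin n) ℝ, H.IsSymm ∧ (∀ i, H i i = 1) ∧
      ∀ i j, T (symSingle n i j) = H i j • symSingle n i j := by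
  refine ⟨of fun i j => if i = j then 1 else (T (symSingle n i j) : Matrix (Fin n) (Fin n) ℝ) i j,
    IsSymm.ext fun i j => ?_, fun i => by simp, fun i j => ?_⟩
  · by_cases hij : i = j
    · simp [hij]
    · simp [hij, Ne.symm hij, symSingle_comm j i, (T (symSingle n i j)).2.apply]
  · by_cases hij : i = j
    · subst hij
      simp [symSingle_self, hE]
    · simpa [hij] using map_symSingle_eq_smul hT hE hij

theorem coe_map_eq_hadamard_of_map_symSingle {T : SymMat n →ₗ[ℝ] SymMat n}
    {H : Matrix (Fin n) (Fin n) ℝ} (hH : H.IsSymm)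
    (h : ∀ i j, T (symSingle n i j) = H i j • symSingle n i j) (A : SymMat n) :
    (T A : Matrix (Fin n) (Fin n) ℝ) = H ⊙ A := by
  let HA : SymMat n := ⟨H ⊙ A, (hH.hadamard A.2 :)⟩
  suffices T A = HA from congrArg Subtype.val this
  calc T A = T ((2⁻¹ : ℝ) • ∑ i, ∑ j, (A : Matrix (Fin n) (Fin n) ℝ) i j • symSingle n i j) := by
        rw [sum_sum_smul_symSingle]
    _ = (2⁻¹ : ℝ) • ∑ i, ∑ j, (HA : Matrix (Fin n) (Fin n) ℝ) i j • symSingle n i j := by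
        simp [map_sum, h, smul_smul, HA, mul_comm]
    _ = HA := sum_sum_smul_symSingle HA

end SymMat

/-- Let `T : Sₙ(ℝ) → Sₙ(ℝ)` be linear, preserving positive definiteness,
with `T(E_ii) = E_ii` for all `i`.  Then there is a positive semi-definite symmetric matrix
`H` with unit diagonal such that `T(A) = H ∘ A` for all `A`; moreover `H = T(𝟏)` where `𝟏`
is the all-ones matrix. -/
theorem stmt13 (n : ℕ) (T : SymMat n →ₗ[ℝ] SymMat n)
    (hT : ∀ A : SymMat n, (A : Matrix (Fin n) (Fin n) ℝ).PosDef →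
      ((T A : Matrix (Fin n) (Fin n) ℝ)).PosDef)
    (hE : ∀ i : Fin n, T (symE n i) = symE n i) :
    ∃ H : Matrix (Fin n) (Fin n) ℝ, H.PosSemidef ∧ (∀ i, H i i = 1) ∧
      (∀ A : SymMat n,
        (T A : Matrix (Fin n) (Fin n) ℝ) = H.hadamard (A : Matrix (Fin n) (Fin n) ℝ)) ∧
      H = (T (symOnes n) : Matrix (Fin n) (Fin n) ℝ) := by
  obtain ⟨H, hH, hdiag, hTH⟩ := exists_isSymm_map_symSingle_eq_smul hT hE
  have hTA := coe_map_eq_hadamard_of_map_symSingle hH hTH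
  have hH1 : H = (T (symOnes n) : Matrix (Fin n) (Fin n) ℝ) := by
    ext i j
    simp [hTA, symOnes]
  have hOnes : ((symOnes n : SymMat n) : Matrix (Fin n) (Fin n) ℝ).PosSemidef := by
    simpa [symOnes, vecMulVec] using posSemidef_vecMulVec_self_star (fun _ : Fin n => (1 : ℝ))
  refine ⟨H, ?_, hdiag, hTA, hH1⟩
  rw [hH1]
  exact posSemidef_map_of_posDef hT (by simp [hE]) hOnes
end
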